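/- Let z, v₁, v₂ ∈ ℂ^{n+1} with |z| = 1 and 0 < d(z,vᵢ) < π/2 for i = 1, 2. Write 1 − γ₀'(z,v₁)·conj(γ₀'(z,v₂)) = x + i·y with x, y ∈ ℝ. Then for every t ∈ ℝ, the points γ_{−t}(z,v₁) and γ_{−t}(z,v₂) are unit vectors with γ_{−t}(z,v₁)·conj(γ_{−t}(z,v₂)) = cos²t + sin²t·(γ₀'(z,v₁)·conj(γ₀'(z,v₂))), and sin²( d(γ_{−t}(z,v₁), γ_{−t}(z,v₂)) ) = 2x·sin²t − (x² + y²)·sin⁴t. -/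

import Mathlib

/-!
For a unit vector `z`, `γ₀'(z,v)` is a multiple of `⟪z,v⟫⁻¹ • v - z`, which is orthogonal to `z`;
Pythagoras gives this vector length `tan d(z,v)`, so the factor `cot d(z,v)` makes `γ₀'(z,v)` a unit
vector orthogonal to `z`. Hence `γ_{-t}(z,v) = cos t • z - sin t • γ₀'(z,v)` and the Hermitian product
of two such points is `cos² t + sin² t · γ₀'(z,v₁)·conj(γ₀'(z,v₂))`.
The last identity is `sin² d = 1 - |γ_{-t}(z,v₁)·conj(γ_{-t}(z,v₂))|²` written out in `x` and `y`.
-/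

noncomputable section

/-- Hermitian product `w·z̄ = Σᵢ wⁱ·conj(zⁱ)` on `ℂ^m`. -/
def herm {m : ℕ} (w z : EuclideanSpace ℂ (Fin m)) : ℂ :=
  ∑ i, w i * (starRingEnd ℂ) (z i)

/-- Fubini–Study distance between (the projective classes of) `p` and `q`. -/
def fsDist {m : ℕ} (p q : EuclideanSpace ℂ (Fin m)) : ℝ :=
  Real.arccos (‖herm p q‖ / (‖p‖ * ‖q‖))

/-- Initial velocity `γ₀'(p,q)` of the geodesic from `[p]` to `[q]`. -/
def gammaDir {m : ℕ} (p q : EuclideanSpace ℂ (Fin m)) : EuclideanSpace ℂ (Fin m) :=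
  (Real.cot (fsDist p q) : ℂ) • (((‖p‖ : ℂ) / herm q p) • q - (‖p‖ : ℂ)⁻¹ • p)

/-- The geodesic `γ_t(p,q) = cos t·(p/|p|) + sin t·γ₀'(p,q)`. -/
def geo {m : ℕ} (t : ℝ) (p q : EuclideanSpace ℂ (Fin m)) : EuclideanSpace ℂ (Fin m) :=
  (Real.cos t : ℂ) • ((‖p‖ : ℂ)⁻¹ • p) + (Real.sin t : ℂ) • gammaDir p q

/-- The velocity `γ_t'(p,q) = −sin t·(p/|p|) + cos t·γ₀'(p,q)`. -/
def geoVel {m : ℕ} (t : ℝ) (p q : EuclideanSpace ℂ (Fin m)) : EuclideanSpace ℂ (Fin m) :=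
  (-(Real.sin t) : ℂ) • ((‖p‖ : ℂ)⁻¹ • p) + (Real.cos t : ℂ) • gammaDir p q

open scoped InnerProductSpace

section FubiniStudy

variable {m : ℕ}

lemma herm_eq_inner (w z : EuclideanSpace ℂ (Fin m)) : herm w z = ⟪z, w⟫_ℂ := by
  simp [herm, PiLp.inner_apply]

lemma cos_fsDist (p q : EuclideanSpace ℂ (Fin m)) :
    Real.cos (fsDist p q) = ‖herm p q‖ / (‖p‖ * ‖q‖) := by
  have hCS : ‖herm p q‖ ≤ ‖p‖ * ‖q‖ := by
    rw [herm_eq_inner, mul_comm]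
    exact norm_inner_le_norm q p
  exact Real.cos_arccos (by linarith [show 0 ≤ ‖herm p q‖ / (‖p‖ * ‖q‖) by positivity])
    (div_le_one_of_le₀ hCS (by positivity))

lemma sin_fsDist_sq (p q : EuclideanSpace ℂ (Fin m)) :
    Real.sin (fsDist p q) ^ 2 = 1 - (‖herm p q‖ / (‖p‖ * ‖q‖)) ^ 2 := by
  rw [Real.sin_sq, cos_fsDist]

variable {z : EuclideanSpace ℂ (Fin m)}

lemma cos_fsDist_of_norm_eq_one (hz : ‖z‖ = 1) (v : EuclideanSpace ℂ (Fin m)) :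
    Real.cos (fsDist z v) = ‖⟪z, v⟫_ℂ‖ / ‖v‖ := by
  rw [cos_fsDist, herm_eq_inner, ← inner_conj_symm, Complex.norm_conj, hz, one_mul]

lemma gammaDir_of_norm_eq_one (hz : ‖z‖ = 1) (v : EuclideanSpace ℂ (Fin m)) :
    gammaDir z v = (Real.cot (fsDist z v) : ℂ) • ((⟪z, v⟫_ℂ)⁻¹ • v - z) := by
  simp [gammaDir, hz, herm_eq_inner]

lemma inner_inv_smul_sub_eq_zero (hz : ‖z‖ = 1) {v : EuclideanSpace ℂ (Fin m)}
    (hc : ⟪z, v⟫_ℂ ≠ 0) : ⟪z, (⟪z, v⟫_ℂ)⁻¹ • v - z⟫_ℂ = 0 := by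
  rw [inner_sub_right, inner_smul_right, inv_mul_cancel₀ hc, inner_self_eq_norm_sq_to_K, hz]
  simp

lemma inner_gammaDir_eq_zero (hz : ‖z‖ = 1) (v : EuclideanSpace ℂ (Fin m)) :
    ⟪z, gammaDir z v⟫_ℂ = 0 := by
  rw [gammaDir_of_norm_eq_one hz, inner_smul_right]
  by_cases hc : ⟪z, v⟫_ℂ = 0
  · have hcos : Real.cos (fsDist z v) = 0 := by
      rw [cos_fsDist_of_norm_eq_one hz, hc, norm_zero, zero_div]
    simp [Real.cot_eq_cos_div_sin, hcos]
  · rw [inner_inv_smul_sub_eq_zero hz hc, mul_zero]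

lemma norm_gammaDir (hz : ‖z‖ = 1) (v : EuclideanSpace ℂ (Fin m))
    (h0 : 0 < fsDist z v) (h2 : fsDist z v < Real.pi / 2) :
    ‖gammaDir z v‖ = 1 := by
  set c := ⟪z, v⟫_ℂ
  have hcos : 0 < Real.cos (fsDist z v) := Real.cos_pos_of_mem_Ioo ⟨by linarith, h2⟩
  have hsin : 0 < Real.sin (fsDist z v) :=
    Real.sin_pos_of_pos_of_lt_pi h0 (by linarith [Real.pi_pos])
  have hcosd : Real.cos (fsDist z v) = ‖c‖ / ‖v‖ := cos_fsDist_of_norm_eq_one hz v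
  have hc : c ≠ 0 := by
    rintro h
    simp [h] at hcosd
    linarith
  have hpyth : ‖c⁻¹ • v‖ ^ 2 = 1 + ‖c⁻¹ • v - z‖ ^ 2 := by
    have := norm_add_sq_eq_norm_sq_add_norm_sq_of_inner_eq_zero z (c⁻¹ • v - z)
      (inner_inv_smul_sub_eq_zero hz hc)
    rw [add_sub_cancel, hz] at this
    linear_combination this
  have hinv : ‖c⁻¹ • v‖ = 1 / Real.cos (fsDist z v) := by
    rw [norm_smul, norm_inv, hcosd]
    field_simp
  have hsq : ‖gammaDir z v‖ ^ 2 = 1 := by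
    rw [gammaDir_of_norm_eq_one hz, norm_smul, mul_pow, Complex.norm_real, Real.norm_eq_abs,
      sq_abs, ← sub_eq_of_eq_add' hpyth, hinv, Real.cot_eq_cos_div_sin]
    field_simp
    linarith [Real.sin_sq_add_cos_sq (fsDist z v)]
  exact (pow_eq_one_iff_of_nonneg (norm_nonneg _) two_ne_zero).mp hsq

lemma inner_cos_smul_sub_sin_smul (hz : ‖z‖ = 1) (t : ℝ) {w w' : EuclideanSpace ℂ (Fin m)}
    (hw : ⟪z, w⟫_ℂ = 0) (hw' : ⟪z, w'⟫_ℂ = 0) :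
    ⟪(Real.cos t : ℂ) • z - (Real.sin t : ℂ) • w, (Real.cos t : ℂ) • z - (Real.sin t : ℂ) • w'⟫_ℂ =
      (Real.cos t : ℂ) ^ 2 + (Real.sin t : ℂ) ^ 2 * ⟪w, w'⟫_ℂ := by
  have hwz : ⟪w, z⟫_ℂ = 0 := by rw [← inner_conj_symm, hw, map_zero]
  have hzz : ⟪z, z⟫_ℂ = 1 := by simp [inner_self_eq_norm_sq_to_K, hz]
  simp only [inner_sub_left, inner_sub_right, inner_smul_left, inner_smul_right, Complex.conj_ofReal,
    hzz, hwz, hw']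
  ring

lemma geo_neg_of_norm_eq_one (hz : ‖z‖ = 1) (v : EuclideanSpace ℂ (Fin m)) (t : ℝ) :
    geo (-t) z v = (Real.cos t : ℂ) • z - (Real.sin t : ℂ) • gammaDir z v := by
  rw [geo, hz, Real.cos_neg, Real.sin_neg]
  push_cast
  module

lemma herm_geo_neg (hz : ‖z‖ = 1) (v v' : EuclideanSpace ℂ (Fin m)) (t : ℝ) :
    herm (geo (-t) z v) (geo (-t) z v') =
      (Real.cos t : ℂ) ^ 2 + (Real.sin t : ℂ) ^ 2 * herm (gammaDir z v) (gammaDir z v') := by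
  rw [herm_eq_inner, herm_eq_inner, geo_neg_of_norm_eq_one hz, geo_neg_of_norm_eq_one hz,
    inner_cos_smul_sub_sin_smul hz t (inner_gammaDir_eq_zero hz v') (inner_gammaDir_eq_zero hz v)]

lemma norm_geo_neg (hz : ‖z‖ = 1) (v : EuclideanSpace ℂ (Fin m))
    (h0 : 0 < fsDist z v) (h2 : fsDist z v < Real.pi / 2) (t : ℝ) :
    ‖geo (-t) z v‖ = 1 := by
  have hinner : ⟪geo (-t) z v, geo (-t) z v⟫_ℂ = 1 := by
    rw [← herm_eq_inner, herm_geo_neg hz, herm_eq_inner, inner_self_eq_norm_sq_to_K,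
      norm_gammaDir hz v h0 h2]
    push_cast
    linear_combination Complex.cos_sq_add_sin_sq (t : ℂ)
  have hsq : ‖geo (-t) z v‖ ^ 2 = 1 := by
    rw [← inner_self_eq_norm_sq (𝕜 := ℂ), hinner, RCLike.one_re]
  exact (pow_eq_one_iff_of_nonneg (norm_nonneg _) two_ne_zero).mp hsq

end FubiniStudy

theorem stmt17_general {n : ℕ} (z v1 v2 : EuclideanSpace ℂ (Fin (n + 1))) (hz : ‖z‖ = 1)
    (h10 : 0 < fsDist z v1) (h12 : fsDist z v1 < Real.pi / 2)
    (h20 : 0 < fsDist z v2) (h22 : fsDist z v2 < Real.pi / 2)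
    (x y : ℝ) (hxy : 1 - herm (gammaDir z v1) (gammaDir z v2) = (x : ℂ) + (y : ℂ) * Complex.I)
    (t : ℝ) :
    ‖geo (-t) z v1‖ = 1 ∧ ‖geo (-t) z v2‖ = 1 ∧
    herm (geo (-t) z v1) (geo (-t) z v2) =
      (Real.cos t : ℂ) ^ 2 + (Real.sin t : ℂ) ^ 2 * herm (gammaDir z v1) (gammaDir z v2) ∧
    Real.sin (fsDist (geo (-t) z v1) (geo (-t) z v2)) ^ 2 =
      2 * x * Real.sin t ^ 2 - (x ^ 2 + y ^ 2) * Real.sin t ^ 4 := by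
  have hn1 := norm_geo_neg hz v1 h10 h12 t
  have hn2 := norm_geo_neg hz v2 h20 h22 t
  have hherm := herm_geo_neg hz v1 v2 t
  refine ⟨hn1, hn2, hherm, ?_⟩
  have hparts : herm (geo (-t) z v1) (geo (-t) z v2) =
      ((1 - Real.sin t ^ 2 * x : ℝ) : ℂ) + ((-(Real.sin t ^ 2 * y) : ℝ) : ℂ) * Complex.I := by
    rw [hherm]
    push_cast
    linear_combination Complex.cos_sq_add_sin_sq (t : ℂ) - Complex.sin t ^ 2 * hxy
  rw [sin_fsDist_sq, hn1, hn2, mul_one, div_one, hparts, Complex.sq_norm, Complex.normSq_add_mul_I]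
  ring

theorem stmt17 {n : ℕ} (z v1 v2 : EuclideanSpace ℂ (Fin (n + 1))) (hz : ‖z‖ = 1)
    (hv1 : v1 ≠ 0) (hv2 : v2 ≠ 0)
    (h10 : 0 < fsDist z v1) (h12 : fsDist z v1 < Real.pi / 2)
    (h20 : 0 < fsDist z v2) (h22 : fsDist z v2 < Real.pi / 2)
    (x y : ℝ) (hxy : 1 - herm (gammaDir z v1) (gammaDir z v2) = (x : ℂ) + (y : ℂ) * Complex.I)
    (t : ℝ) :
    ‖geo (-t) z v1‖ = 1 ∧ ‖geo (-t) z v2‖ = 1 ∧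
    herm (geo (-t) z v1) (geo (-t) z v2) =
      (Real.cos t : ℂ) ^ 2 + (Real.sin t : ℂ) ^ 2 * herm (gammaDir z v1) (gammaDir z v2) ∧
    Real.sin (fsDist (geo (-t) z v1) (geo (-t) z v2)) ^ 2 =
      2 * x * Real.sin t ^ 2 - (x ^ 2 + y ^ 2) * Real.sin t ^ 4 :=
  stmt17_general z v1 v2 hz h10 h12 h20 h22 x y hxy t
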